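/- arXiv:1301.6534 — 5 statements merged into one kernel-verified Lean document; each statement's English description precedes it below -/
import Mathlib

section
/- For x, x̄ in the closed upper half-space R^N_+ (points x = (x', x_N) with x_N ≥ 0), define s(x, x̄) = |x − x̄| / (x_N^{α/2} + x̄_N^{α/2} + |x' − x̄'|^{α/2}) with 0 < α < 1. If ε₀ ∈ (0,1) and |x' − x̄'| ≥ ε₀ x_N, then s(x, x̄) ≤ C |x − x̄|^{1 − α/2} for a constant C depending only on α and ε₀. -/
/-- Euclidean distance between the half-space points `(p, pN)` and `(q, qN)`. -/
noncomputable def eDist {n : ℕ} (p q : EuclideanSpace ℝ (Fin n)) (pN qN : ℝ) : ℝ :=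
  Real.sqrt (‖p - q‖ ^ 2 + (pN - qN) ^ 2)

/-- The intrinsic quasi-distance `s` adapted to the degenerate operator `∂ₜ - x_N^α Δ`. -/
noncomputable def sDist (α : ℝ) {n : ℕ} (p q : EuclideanSpace ℝ (Fin n)) (pN qN : ℝ) : ℝ :=
  eDist p q pN qN / (pN ^ (α / 2) + qN ^ (α / 2) + ‖p - q‖ ^ (α / 2))

theorem stmt_3 (α ε₀ : ℝ) (hα : 0 < α) (hα1 : α < 1) (hε : 0 < ε₀) (hε1 : ε₀ < 1) :
    ∃ C : ℝ, 0 < C ∧ ∀ (n : ℕ) (p q : EuclideanSpace ℝ (Fin n)) (pN qN : ℝ),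
      0 ≤ qN → qN ≤ pN → ε₀ * pN ≤ ‖p - q‖ →
      sDist α p q pN qN ≤ C * eDist p q pN qN ^ (1 - α / 2) := by
  set K := Real.sqrt (1 + ε₀⁻¹ ^ 2) with hKdef
  have hKpos : 0 < K := Real.sqrt_pos.mpr (by positivity)
  refine ⟨K ^ (α / 2), by positivity, ?_⟩
  intro n p q pN qN hq hqp hrb
  set r := ‖p - q‖ with hrdef
  have hr0 : 0 ≤ r := norm_nonneg _
  have hpN : 0 ≤ pN := le_trans hq hqp
  set d := eDist p q pN qN with hd
  have hd0 : 0 ≤ d := Real.sqrt_nonneg _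
  have hrd : r ≤ d := by
    calc r = Real.sqrt (r ^ 2) := (Real.sqrt_sq hr0).symm
      _ ≤ Real.sqrt (r ^ 2 + (pN - qN) ^ 2) :=
          Real.sqrt_le_sqrt (by nlinarith [sq_nonneg (pN - qN)])
      _ = d := rfl
  have hdK : d ≤ K * r := by
    have hK2 : K ^ 2 = 1 + ε₀⁻¹ ^ 2 := Real.sq_sqrt (by positivity)
    have hpr : pN ≤ r * ε₀⁻¹ := by
      have h := mul_le_mul_of_nonneg_right hrb (le_of_lt (inv_pos.mpr hε))
      rwa [mul_comm ε₀ pN, mul_assoc, mul_inv_cancel₀ hε.ne', mul_one] at h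
    have h2 : (pN - qN) ^ 2 ≤ (r * ε₀⁻¹) ^ 2 := by
      apply sq_le_sq' <;> nlinarith [mul_nonneg hr0 (le_of_lt (inv_pos.mpr hε))]
    calc d = Real.sqrt (r ^ 2 + (pN - qN) ^ 2) := rfl
      _ ≤ Real.sqrt ((K * r) ^ 2) := Real.sqrt_le_sqrt (by nlinarith)
      _ = K * r := Real.sqrt_sq (by positivity)
  rcases eq_or_lt_of_le hr0 with h0 | hrpos
  · -- r = 0, so d = 0 and both sides are 0
    have hd00 : d = 0 := le_antisymm (by nlinarith [hdK]) hd0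
    rw [sDist, ← hd, ← hrdef, hd00, zero_div,
      Real.zero_rpow (ne_of_gt (by linarith : (0:ℝ) < 1 - α / 2)), mul_zero]
  · have hdpos : 0 < d := lt_of_lt_of_le hrpos hrd
    have hrpow : 0 < r ^ (α / 2) := Real.rpow_pos_of_pos hrpos _
    rw [sDist, ← hd, ← hrdef]
    have step1 : d / (pN ^ (α / 2) + qN ^ (α / 2) + r ^ (α / 2)) ≤ d / r ^ (α / 2) := by
      apply div_le_div_of_nonneg_left hd0 hrpow
      have h1 : 0 ≤ pN ^ (α / 2) := Real.rpow_nonneg hpN _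
      have h2 : 0 ≤ qN ^ (α / 2) := Real.rpow_nonneg hq _
      linarith
    refine le_trans step1 ?_
    rw [div_le_iff₀ hrpow]
    have hsplit : d ^ (1 - α / 2) * d ^ (α / 2) = d := by
      rw [← Real.rpow_add hdpos, show (1 : ℝ) - α / 2 + α / 2 = 1 by ring, Real.rpow_one]
    calc d = d ^ (1 - α / 2) * d ^ (α / 2) := hsplit.symm
      _ ≤ d ^ (1 - α / 2) * (K * r) ^ (α / 2) :=
          mul_le_mul_of_nonneg_left (Real.rpow_le_rpow hd0 hdK (by positivity))
            (Real.rpow_nonneg hd0 _)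
      _ = K ^ (α / 2) * d ^ (1 - α / 2) * r ^ (α / 2) := by
          rw [Real.mul_rpow hKpos.le hr0]; ring
end

section
/- With s as above and 0 < α < 1: for any x, x̄ in the upper half-space with x_N ≥ x̄_N ≥ 0 and |x' − x̄'| ≥ x_N (or more generally |x'−x̄'| ≥ ε₀ x_N), one has s(x, x̄) ≥ ν |x − x̄|^{1 − α/2} for some constant ν > 0 depending only on α and ε₀. -/
theorem stmt_5 (α ε₀ : ℝ) (hα : 0 < α) (hα1 : α < 1) (hε : 0 < ε₀) (hε1 : ε₀ < 1) :
    ∃ ν : ℝ, 0 < ν ∧ ∀ (n : ℕ) (p q : EuclideanSpace ℝ (Fin n)) (pN qN : ℝ),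
      0 ≤ qN → qN ≤ pN → ε₀ * pN ≤ ‖p - q‖ →
      ν * eDist p q pN qN ^ (1 - α / 2) ≤ sDist α p q pN qN := by
  have hcpos : (0:ℝ) < ε₀ ^ (-(α/2)) := Real.rpow_pos_of_pos hε _
  set c : ℝ := ε₀ ^ (-(α/2)) with hc
  refine ⟨1/(2*c+1), by positivity, ?_⟩
  intro n p q pN qN hq hqp hpb
  have hE0 : 0 ≤ eDist p q pN qN := Real.sqrt_nonneg _
  have hnorm_le : ‖p - q‖ ≤ eDist p q pN qN := by
    have h := Real.sqrt_le_sqrt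
      (show ‖p - q‖^2 ≤ ‖p - q‖^2 + (pN - qN)^2 by nlinarith [sq_nonneg (pN - qN)])
    rwa [Real.sqrt_sq (norm_nonneg _)] at h
  have hpN0 : 0 ≤ pN := le_trans hq hqp
  rcases eq_or_lt_of_le hE0 with hE | hE
  · rw [sDist, ← hE, Real.zero_rpow (by linarith : (1:ℝ) - α/2 ≠ 0), zero_div, mul_zero]
  · set E := eDist p q pN qN with hEdef
    have hnq : 0 < ‖p - q‖ := by
      rcases lt_or_eq_of_le (norm_nonneg (p - q)) with h | h
      · exact h
      · exfalso
        have hpz : pN = 0 := le_antisymm (by nlinarith) hpN0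
        have hqz : qN = 0 := le_antisymm (by linarith) hq
        have : E = 0 := by
          rw [hEdef, eDist, ← h, hpz, hqz]
          simp
        linarith
    have hEa : 0 < E ^ (α/2) := Real.rpow_pos_of_pos hE _
    have hexp : 0 ≤ α/2 := by linarith
    have h3 : ‖p - q‖ ^ (α/2) ≤ E ^ (α/2) :=
      Real.rpow_le_rpow (norm_nonneg _) hnorm_le hexp
    have hEdiv : (E / ε₀) ^ (α/2) = c * E ^ (α/2) := by
      rw [Real.div_rpow hE.le hε.le, hc, Real.rpow_neg hε.le, div_eq_mul_inv, mul_comm]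
    have h1 : pN ^ (α/2) ≤ c * E ^ (α/2) := by
      rw [← hEdiv]
      refine Real.rpow_le_rpow hpN0 ?_ hexp
      rw [le_div_iff₀ hε]
      calc pN * ε₀ = ε₀ * pN := mul_comm _ _
        _ ≤ ‖p - q‖ := hpb
        _ ≤ E := hnorm_le
    have h2 : qN ^ (α/2) ≤ c * E ^ (α/2) := by
      refine le_trans (Real.rpow_le_rpow hq hqp hexp) h1
    set D : ℝ := pN ^ (α/2) + qN ^ (α/2) + ‖p - q‖ ^ (α/2) with hD
    have hDpos : 0 < D := by
      rw [hD]
      have := Real.rpow_pos_of_pos hnq (α/2)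
      have := Real.rpow_nonneg hpN0 (α/2)
      have := Real.rpow_nonneg hq (α/2)
      linarith
    have hDle : D ≤ (2*c+1) * E ^ (α/2) := by rw [hD]; nlinarith
    have hstep : E / ((2*c+1) * E ^ (α/2)) ≤ E / D :=
      div_le_div_of_nonneg_left hE.le hDpos hDle
    have heq : 1/(2*c+1) * E ^ (1 - α/2) = E / ((2*c+1) * E ^ (α/2)) := by
      rw [show (1:ℝ) - α/2 = 1 - α/2 from rfl, Real.rpow_sub hE, Real.rpow_one]
      field_simp
    rw [sDist]
    calc 1/(2*c+1) * E ^ (1 - α/2) = E / ((2*c+1) * E ^ (α/2)) := heq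
      _ ≤ E / D := hstep
end

section
/- Let 0 < α < 1, 0 < γ < 1, β = γ(1−α/2), and let f : R^N_+ → ℝ satisfy the two conditions: (i) |f(x) − f(x̄)| ≤ M |x − x̄|^β for all x, x̄, and (ii) x_N^{γα/2} |f(x) − f(x̄)| ≤ M |x − x̄|^γ whenever x_N ≥ x̄_N. Then |f(x) − f(x̄)| ≤ C M s(x, x̄)^γ for all x, x̄ ∈ R^N_+, with C depending only on α, γ, where s(x, x̄) = |x − x̄| / (x_N^{α/2} + x̄_N^{α/2} + |x'−x̄'|^{α/2}). -/
lemma eDist_symm' {n : ℕ} (p q : EuclideanSpace ℝ (Fin n)) (pN qN : ℝ) :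
    eDist p q pN qN = eDist q p qN pN := by
  unfold eDist
  rw [norm_sub_rev q p]
  congr 1
  ring

lemma sDist_symm' (α : ℝ) {n : ℕ} (p q : EuclideanSpace ℝ (Fin n)) (pN qN : ℝ) :
    sDist α p q pN qN = sDist α q p qN pN := by
  unfold sDist
  rw [eDist_symm' p q pN qN, norm_sub_rev q p]
  ring_nf

lemma norm_le_eDist' {n : ℕ} (p q : EuclideanSpace ℝ (Fin n)) (pN qN : ℝ) :
    ‖p - q‖ ≤ eDist p q pN qN := by
  have h : ‖p - q‖ = Real.sqrt (‖p - q‖ ^ 2) := (Real.sqrt_sq (norm_nonneg _)).symm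
  rw [h, eDist]
  exact Real.sqrt_le_sqrt (by nlinarith [sq_nonneg (pN - qN)])

lemma abs_le_eDist' {n : ℕ} (p q : EuclideanSpace ℝ (Fin n)) (pN qN : ℝ) :
    |pN - qN| ≤ eDist p q pN qN := by
  have h : |pN - qN| = Real.sqrt ((pN - qN) ^ 2) := (Real.sqrt_sq_eq_abs _).symm
  rw [h, eDist]
  exact Real.sqrt_le_sqrt (by nlinarith [sq_nonneg ‖p - q‖])

lemma eDist_le_add' {n : ℕ} (p q : EuclideanSpace ℝ (Fin n)) (pN qN : ℝ) :
    eDist p q pN qN ≤ ‖p - q‖ + |pN - qN| := by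
  rw [eDist]
  have h : ‖p - q‖ + |pN - qN| = Real.sqrt ((‖p - q‖ + |pN - qN|) ^ 2) :=
    (Real.sqrt_sq (by positivity)).symm
  rw [h]
  apply Real.sqrt_le_sqrt
  nlinarith [sq_abs (pN - qN), mul_nonneg (norm_nonneg (p - q)) (abs_nonneg (pN - qN))]

/-- Purely arithmetic core of the proof. Here `a = pN`, `b = qN`, `c = ‖p - q‖`,
`d = eDist`, `A = f p pN - f q qN`. -/
lemma key_lemma (α γ M a b c d A : ℝ) (hα : 0 < α) (hα1 : α < 1) (hγ : 0 < γ) (hγ1 : γ < 1)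
    (hM : 0 ≤ M) (hb : 0 ≤ b) (hba : b ≤ a) (hc : 0 ≤ c) (hd : 0 ≤ d)
    (hcd : c ≤ d) (habd : a - b ≤ d) (hdle : d ≤ c + (a - b))
    (hA : |A| ≤ M * d ^ (γ * (1 - α / 2)))
    (hA2 : a ^ (γ * α / 2) * |A| ≤ M * d ^ γ) :
    |A| ≤ 3 * M * (d / (a ^ (α / 2) + b ^ (α / 2) + c ^ (α / 2))) ^ γ := by
  have hα2 : 0 < α / 2 := by linarith
  have ha : 0 ≤ a := le_trans hb hba
  by_cases hd0 : d = 0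
  · subst hd0
    have hz : (0:ℝ) ^ (γ * (1 - α / 2)) = 0 := Real.zero_rpow (ne_of_gt (by nlinarith))
    rw [hz, mul_zero] at hA
    rw [zero_div, Real.zero_rpow hγ.ne', mul_zero]
    exact hA
  · have hdpos : 0 < d := lt_of_le_of_ne hd (Ne.symm hd0)
    set E := a ^ (α / 2) + b ^ (α / 2) + c ^ (α / 2) with hE
    have hEpos : 0 < E := by
      have hac : 0 < a ∨ 0 < c := by
        by_contra h
        push_neg at h
        obtain ⟨h1, h2⟩ := h
        have ha0 : a = 0 := le_antisymm h1 ha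
        have hc0 : c = 0 := le_antisymm h2 hc
        have hb0 : b = 0 := le_antisymm (ha0 ▸ hba) hb
        rw [ha0, hb0, hc0] at hdle
        linarith
      have e1 : 0 ≤ a ^ (α / 2) := Real.rpow_nonneg ha _
      have e2 : 0 ≤ b ^ (α / 2) := Real.rpow_nonneg hb _
      have e3 : 0 ≤ c ^ (α / 2) := Real.rpow_nonneg hc _
      rcases hac with h | h
      · have := Real.rpow_pos_of_pos h (α / 2); rw [hE]; linarith
      · have := Real.rpow_pos_of_pos h (α / 2); rw [hE]; linarith
    suffices hsuf : |A| ≤ M * (3 * (d / E)) ^ γ by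
      have h3 : (0:ℝ) ≤ d / E := div_nonneg hd hEpos.le
      have hmul : (3 * (d / E)) ^ γ = 3 ^ γ * (d / E) ^ γ := Real.mul_rpow (by norm_num) h3
      have h3g : (3:ℝ) ^ γ ≤ 3 := by
        calc (3:ℝ) ^ γ ≤ 3 ^ (1:ℝ) := Real.rpow_le_rpow_of_exponent_le (by norm_num) hγ1.le
          _ = 3 := Real.rpow_one 3
      calc |A| ≤ M * (3 ^ γ * (d / E) ^ γ) := by rw [← hmul]; exact hsuf
        _ ≤ M * (3 * (d / E) ^ γ) := by
            apply mul_le_mul_of_nonneg_left _ hM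
            exact mul_le_mul_of_nonneg_right h3g (Real.rpow_nonneg h3 γ)
        _ = 3 * M * (d / E) ^ γ := by ring
    rcases le_or_gt a d with hcase | hcase
    · -- Case A : a ≤ d, use the first Hölder hypothesis
      have hEle : E ≤ 3 * d ^ (α / 2) := by
        have e1 : a ^ (α / 2) ≤ d ^ (α / 2) := Real.rpow_le_rpow ha hcase hα2.le
        have e2 : b ^ (α / 2) ≤ d ^ (α / 2) := Real.rpow_le_rpow hb (le_trans hba hcase) hα2.le
        have e3 : c ^ (α / 2) ≤ d ^ (α / 2) := Real.rpow_le_rpow hc hcd hα2.le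
        rw [hE]; linarith
      have hmul : d ^ (1 - α / 2) * d ^ (α / 2) = d := by
        rw [← Real.rpow_add hdpos]; norm_num
      have hstep : d ^ (1 - α / 2) ≤ 3 * (d / E) := by
        rw [show 3 * (d / E) = 3 * d / E from (mul_div_assoc 3 d E).symm, le_div_iff₀ hEpos]
        calc d ^ (1 - α / 2) * E ≤ d ^ (1 - α / 2) * (3 * d ^ (α / 2)) :=
              mul_le_mul_of_nonneg_left hEle (Real.rpow_nonneg hd _)
          _ = 3 * d := by
              rw [show d ^ (1 - α / 2) * (3 * d ^ (α / 2)) =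
                3 * (d ^ (1 - α / 2) * d ^ (α / 2)) from by ring, hmul]
      calc |A| ≤ M * d ^ (γ * (1 - α / 2)) := hA
        _ = M * (d ^ (1 - α / 2)) ^ γ := by rw [mul_comm γ, Real.rpow_mul hd]
        _ ≤ M * (3 * (d / E)) ^ γ :=
            mul_le_mul_of_nonneg_left
              (Real.rpow_le_rpow (Real.rpow_nonneg hd _) hstep hγ.le) hM
    · -- Case B : d < a, use the second Hölder hypothesis
      have hapos : 0 < a := hdpos.trans hcase
      have hap : 0 < a ^ (α / 2) := Real.rpow_pos_of_pos hapos _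
      have hEle : E ≤ 3 * a ^ (α / 2) := by
        have e2 : b ^ (α / 2) ≤ a ^ (α / 2) := Real.rpow_le_rpow hb hba hα2.le
        have e3 : c ^ (α / 2) ≤ a ^ (α / 2) :=
          Real.rpow_le_rpow hc (le_trans hcd hcase.le) hα2.le
        rw [hE]; linarith
      have hstep : d / a ^ (α / 2) ≤ 3 * (d / E) := by
        rw [show 3 * (d / E) = 3 * d / E from (mul_div_assoc 3 d E).symm,
          div_le_div_iff₀ hap hEpos]
        nlinarith [mul_le_mul_of_nonneg_left hEle hd]
      have hag : 0 < a ^ (γ * α / 2) := Real.rpow_pos_of_pos hapos _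
      have h4 : |A| ≤ M * (d / a ^ (α / 2)) ^ γ := by
        rw [Real.div_rpow hd (Real.rpow_nonneg ha _), ← Real.rpow_mul ha,
          show α / 2 * γ = γ * α / 2 from by ring, ← mul_div_assoc, le_div_iff₀ hag, mul_comm]
        exact hA2
      calc |A| ≤ M * (d / a ^ (α / 2)) ^ γ := h4
        _ ≤ M * (3 * (d / E)) ^ γ :=
            mul_le_mul_of_nonneg_left
              (Real.rpow_le_rpow (div_nonneg hd hap.le) hstep hγ.le) hM

theorem stmt_6 (α γ : ℝ) (hα : 0 < α) (hα1 : α < 1) (hγ : 0 < γ) (hγ1 : γ < 1) :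
    ∃ C : ℝ, 0 < C ∧ ∀ (n : ℕ) (M : ℝ) (f : EuclideanSpace ℝ (Fin n) → ℝ → ℝ),
      (∀ (p q : EuclideanSpace ℝ (Fin n)) (pN qN : ℝ), 0 ≤ pN → 0 ≤ qN →
        |f p pN - f q qN| ≤ M * eDist p q pN qN ^ (γ * (1 - α / 2))) →
      (∀ (p q : EuclideanSpace ℝ (Fin n)) (pN qN : ℝ), 0 ≤ qN → qN ≤ pN →
        pN ^ (γ * α / 2) * |f p pN - f q qN| ≤ M * eDist p q pN qN ^ γ) →
      ∀ (p q : EuclideanSpace ℝ (Fin n)) (pN qN : ℝ), 0 ≤ pN → 0 ≤ qN →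
        |f p pN - f q qN| ≤ C * M * sDist α p q pN qN ^ γ := by
  refine ⟨3, by norm_num, ?_⟩
  intro n M f h1 h2 p q pN qN hp hq
  have hM : 0 ≤ M := by
    have h := h1 p p 1 0 (by norm_num) (by norm_num)
    have hone : eDist p p 1 0 = 1 := by
      unfold eDist; simp
    rw [hone, Real.one_rpow, mul_one] at h
    exact le_trans (abs_nonneg _) h
  have main : ∀ (p q : EuclideanSpace ℝ (Fin n)) (pN qN : ℝ), 0 ≤ qN → qN ≤ pN →
      |f p pN - f q qN| ≤ 3 * M * sDist α p q pN qN ^ γ := by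
    intro p q pN qN hq hle
    have hd : 0 ≤ eDist p q pN qN := Real.sqrt_nonneg _
    have hnorm := norm_le_eDist' p q pN qN
    have habs := abs_le_eDist' p q pN qN
    have hle' := eDist_le_add' p q pN qN
    have habs' : |pN - qN| = pN - qN := abs_of_nonneg (by linarith)
    rw [sDist]
    exact key_lemma α γ M pN qN ‖p - q‖ (eDist p q pN qN) (f p pN - f q qN)
      hα hα1 hγ hγ1 hM hq hle (norm_nonneg _) hd hnorm (by rw [← habs']; exact habs)
      (by rw [← habs']; exact hle')
      (h1 p q pN qN (le_trans hq hle) hq) (h2 p q pN qN hq hle)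
  rcases le_total qN pN with h | h
  · exact main p q pN qN hq h
  · rw [abs_sub_comm, sDist_symm']
    exact main q p qN pN hp h
end

section
/- Let 0 < α < 1, 0 < γ < 1, β = γ(1−α/2), and let f : R^N_+ → ℝ satisfy |f(x) − f(x̄)| ≤ M s(x, x̄)^γ for all x, x̄ in the closed upper half-space, where s(x, x̄) = |x − x̄| / (x_N^{α/2} + x̄_N^{α/2} + |x'−x̄'|^{α/2}). Then there is C = C(α,γ) such that: (i) |f(x) − f(x̄)| ≤ C M |x − x̄|^β for all x, x̄; and (ii) x_N^{γα/2} |f(x) − f(x̄)| ≤ C M |x − x̄|^γ whenever x_N ≥ x̄_N. -/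
/-- Subadditivity of `x ↦ x ^ p` for `0 ≤ p ≤ 1`. -/
lemma rpow_add_le_add_rpow' {x y p : ℝ} (hx : 0 ≤ x) (hy : 0 ≤ y) (hp : 0 ≤ p) (hp1 : p ≤ 1) :
    (x + y) ^ p ≤ x ^ p + y ^ p := by
  have h := NNReal.rpow_add_le_add_rpow x.toNNReal y.toNNReal hp hp1
  have h' := NNReal.coe_le_coe.2 h
  push_cast [NNReal.coe_rpow] at h'
  rwa [Real.coe_toNNReal x hx, Real.coe_toNNReal y hy] at h'

lemma eDist_nonneg {n : ℕ} (p q : EuclideanSpace ℝ (Fin n)) (pN qN : ℝ) :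
    0 ≤ eDist p q pN qN := Real.sqrt_nonneg _

/-- Key inequality: `d^(α/2) ≤ pN^(α/2) + qN^(α/2) + ‖p-q‖^(α/2)`. -/
lemma key {α : ℝ} (hα : 0 < α) (hα1 : α < 1) {n : ℕ} (p q : EuclideanSpace ℝ (Fin n))
    {pN qN : ℝ} (hp : 0 ≤ pN) (hq : 0 ≤ qN) :
    eDist p q pN qN ^ (α / 2) ≤ pN ^ (α / 2) + qN ^ (α / 2) + ‖p - q‖ ^ (α / 2) := by
  set a := ‖p - q‖ with ha
  have ha0 : 0 ≤ a := norm_nonneg _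
  have hd : eDist p q pN qN ≤ a + (pN + qN) := by
    have h1 : eDist p q pN qN ≤ a + |pN - qN| := by
      rw [eDist]
      have : Real.sqrt (a ^ 2 + (pN - qN) ^ 2) ≤ Real.sqrt ((a + |pN - qN|) ^ 2) := by
        apply Real.sqrt_le_sqrt
        nlinarith [abs_nonneg (pN - qN), sq_abs (pN - qN), mul_nonneg ha0 (abs_nonneg (pN - qN))]
      rwa [Real.sqrt_sq (by positivity)] at this
    have h2 : |pN - qN| ≤ pN + qN :=
      abs_sub_le_iff.mpr ⟨by linarith, by linarith⟩
    linarith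
  have hp2 : (0:ℝ) ≤ α / 2 := by linarith
  have hp21 : α / 2 ≤ 1 := by linarith
  calc eDist p q pN qN ^ (α / 2) ≤ (a + (pN + qN)) ^ (α / 2) :=
        Real.rpow_le_rpow (eDist_nonneg p q pN qN) hd hp2
    _ ≤ a ^ (α / 2) + (pN + qN) ^ (α / 2) :=
        rpow_add_le_add_rpow' ha0 (by linarith) hp2 hp21
    _ ≤ a ^ (α / 2) + (pN ^ (α / 2) + qN ^ (α / 2)) := by
        have := rpow_add_le_add_rpow' hp hq hp2 hp21
        linarith
    _ = pN ^ (α / 2) + qN ^ (α / 2) + a ^ (α / 2) := by ring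

theorem stmt_7 (α γ : ℝ) (hα : 0 < α) (hα1 : α < 1) (hγ : 0 < γ) (hγ1 : γ < 1) :
    ∃ C : ℝ, 0 < C ∧ ∀ (n : ℕ) (M : ℝ) (f : EuclideanSpace ℝ (Fin n) → ℝ → ℝ),
      (∀ (p q : EuclideanSpace ℝ (Fin n)) (pN qN : ℝ), 0 ≤ pN → 0 ≤ qN →
        |f p pN - f q qN| ≤ M * sDist α p q pN qN ^ γ) →
      (∀ (p q : EuclideanSpace ℝ (Fin n)) (pN qN : ℝ), 0 ≤ pN → 0 ≤ qN →
        |f p pN - f q qN| ≤ C * M * eDist p q pN qN ^ (γ * (1 - α / 2))) ∧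
      (∀ (p q : EuclideanSpace ℝ (Fin n)) (pN qN : ℝ), 0 ≤ qN → qN ≤ pN →
        pN ^ (γ * α / 2) * |f p pN - f q qN| ≤ C * M * eDist p q pN qN ^ γ) := by
  refine ⟨1, one_pos, fun n M f hf => ?_⟩
  -- M is nonnegative
  have hM : 0 ≤ M := by
    have h := hf 0 0 1 0 zero_le_one le_rfl
    have hs : sDist α (0 : EuclideanSpace ℝ (Fin n)) 0 1 0 = 1 := by
      rw [sDist, eDist]
      simp [Real.zero_rpow (by positivity : α / 2 ≠ 0)]
    rw [hs, Real.one_rpow, mul_one] at h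
    exact le_trans (abs_nonneg _) h
  have hα2 : (0:ℝ) < α / 2 := by linarith
  constructor
  · intro p q pN qN hp hq
    set d := eDist p q pN qN with hdd
    have hd0 : 0 ≤ d := eDist_nonneg p q pN qN
    set D := pN ^ (α / 2) + qN ^ (α / 2) + ‖p - q‖ ^ (α / 2) with hD
    have hD0 : 0 ≤ D := by
      rw [hD]
      exact add_nonneg (add_nonneg (Real.rpow_nonneg hp _) (Real.rpow_nonneg hq _))
        (Real.rpow_nonneg (norm_nonneg _) _)
    have hkey : d ^ (α / 2) ≤ D := key hα hα1 p q hp hq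
    have hs : sDist α p q pN qN ≤ d ^ (1 - α / 2) := by
      rcases eq_or_lt_of_le hd0 with h0 | h0
      · rw [sDist, ← hdd, ← h0]
        rw [Real.zero_rpow (ne_of_gt (by linarith : (0:ℝ) < 1 - α / 2))]
        simp
      · have hDpos : 0 < D := lt_of_lt_of_le (Real.rpow_pos_of_pos h0 _) hkey
        rw [sDist, ← hdd, ← hD]
        calc d / D ≤ d / d ^ (α / 2) :=
              div_le_div_of_nonneg_left hd0 (Real.rpow_pos_of_pos h0 _) hkey
          _ = d ^ (1 - α / 2) := by
              rw [Real.rpow_sub h0, Real.rpow_one]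
    have hsγ : sDist α p q pN qN ^ γ ≤ d ^ (γ * (1 - α / 2)) := by
      have := Real.rpow_le_rpow (by
        rw [sDist]; positivity) hs hγ.le
      rwa [← Real.rpow_mul hd0, mul_comm (1 - α / 2) γ] at this
    calc |f p pN - f q qN| ≤ M * sDist α p q pN qN ^ γ := hf p q pN qN hp hq
      _ ≤ M * d ^ (γ * (1 - α / 2)) := by
          exact mul_le_mul_of_nonneg_left hsγ hM
      _ = 1 * M * d ^ (γ * (1 - α / 2)) := by ring
  · intro p q pN qN hq hqp
    have hp : 0 ≤ pN := le_trans hq hqp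
    set d := eDist p q pN qN with hdd
    have hd0 : 0 ≤ d := eDist_nonneg p q pN qN
    set D := pN ^ (α / 2) + qN ^ (α / 2) + ‖p - q‖ ^ (α / 2) with hD
    have hq2 := Real.rpow_nonneg hq (α / 2)
    have hn2 := Real.rpow_nonneg (norm_nonneg (p - q)) (α / 2)
    have hp2 := Real.rpow_nonneg hp (α / 2)
    have hD0 : 0 ≤ D := by rw [hD]; linarith
    have hDub : pN ^ (α / 2) ≤ D := by rw [hD]; linarith
    have hpow : pN ^ (γ * α / 2) = (pN ^ (α / 2)) ^ γ := by
      rw [← Real.rpow_mul hp]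
      ring_nf
    rcases eq_or_lt_of_le hD0 with h0 | h0
    · -- D = 0, so pN = 0 and d bounds trivially
      have hpN0 : pN ^ (α / 2) = 0 := by
        have : pN ^ (α / 2) + qN ^ (α / 2) + ‖p - q‖ ^ (α / 2) = 0 := by rw [← hD, ← h0]
        linarith
      have : pN = 0 := by
        by_contra hne
        have : 0 < pN := lt_of_le_of_ne hp (Ne.symm hne)
        exact absurd hpN0 (ne_of_gt (Real.rpow_pos_of_pos this _))
      rw [this, Real.zero_rpow (by positivity : γ * α / 2 ≠ 0), zero_mul]
      positivity
    · have hDub' : (pN ^ (α / 2)) ^ γ ≤ D ^ γ := Real.rpow_le_rpow hp2 hDub hγ.le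
      have hfq := hf p q pN qN hp hq
      have hsd : sDist α p q pN qN ^ γ = d ^ γ / D ^ γ := by
        rw [sDist, ← hdd, ← hD, Real.div_rpow hd0 hD0]
      rw [hsd] at hfq
      have hDγ : 0 < D ^ γ := Real.rpow_pos_of_pos h0 _
      calc pN ^ (γ * α / 2) * |f p pN - f q qN|
          ≤ pN ^ (γ * α / 2) * (M * (d ^ γ / D ^ γ)) := by
            apply mul_le_mul_of_nonneg_left hfq (by positivity)
        _ ≤ D ^ γ * (M * (d ^ γ / D ^ γ)) := by
            apply mul_le_mul_of_nonneg_right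
            · rw [hpow]; exact hDub'
            · positivity
        _ = 1 * M * d ^ γ := by
            field_simp
end

section
/- Let 0 < l < 1 and define ψ(x_N, y₁, y₂) = y₁ y₂ [(y₁ + x_N)^l + (y₂ + x_N)^l]^{−1/l + 1} for x_N ≥ 0 and y₁, y₂ ∈ (0,1]. Then the normal derivative at the boundary satisfies ∂ψ/∂x_N (0, y₁, y₂) ≤ −ν min(y₁, y₂)^l for a constant ν > 0 depending only on l. -/
/-- The barrier function `ψ(x_N,y₁,y₂) = y₁ y₂ [(y₁+x_N)^l + (y₂+x_N)^l]^(-1/l + 1)`. -/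
noncomputable def psi (l y₁ y₂ xN : ℝ) : ℝ :=
  y₁ * y₂ * ((y₁ + xN) ^ l + (y₂ + xN) ^ l) ^ (-1 / l + 1)

lemma key_ineq (l y₁ y₂ : ℝ) (hl : 0 < l) (_hl1 : l < 1) (h1 : 0 < y₁) (h2 : 0 < y₂)
    (h12 : y₁ ≤ y₂) :
    (2:ℝ) ^ (-1/l) * y₁ ^ l ≤
      y₁ * y₂ * ((y₁ ^ (l-1) + y₂ ^ (l-1)) * (y₁ ^ l + y₂ ^ l) ^ (-1/l)) := by
  have hSpos : 0 < y₁ ^ l + y₂ ^ l := by positivity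
  have hS : y₁ ^ l + y₂ ^ l ≤ 2 * y₂ ^ l := by
    have := Real.rpow_le_rpow h1.le h12 hl.le
    linarith
  have hexp : -1/l ≤ 0 := by
    rw [neg_div]
    exact neg_nonpos.mpr (by positivity)
  have hinv : (2 * y₂ ^ l) ^ (-1/l) ≤ (y₁ ^ l + y₂ ^ l) ^ (-1/l) :=
    Real.rpow_le_rpow_of_nonpos hSpos hS hexp
  have heq : (2 * y₂ ^ l) ^ (-1/l) = 2 ^ (-1/l) * y₂ ^ (-1 : ℝ) := by
    rw [Real.mul_rpow (by norm_num) (by positivity), ← Real.rpow_mul h2.le]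
    congr 1
    field_simp
  have step1 : y₁ * y₂ * (y₁ ^ (l-1) * (2 ^ (-1/l) * y₂ ^ (-1:ℝ))) ≤
      y₁ * y₂ * ((y₁ ^ (l-1) + y₂ ^ (l-1)) * (y₁ ^ l + y₂ ^ l) ^ (-1/l)) := by
    have hA : (0:ℝ) < y₁ ^ (l-1) := by positivity
    have hB : (0:ℝ) ≤ y₂ ^ (l-1) := by positivity
    rw [← heq]
    gcongr
    linarith
  refine le_trans (le_of_eq ?_) step1
  have e1 : y₁ * y₁ ^ (l-1) = y₁ ^ l := by
    have h := Real.rpow_add h1 1 (l-1)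
    rw [Real.rpow_one] at h
    rw [← h, show (1:ℝ) + (l-1) = l from by ring]
  have e2 : y₂ * y₂ ^ (-1:ℝ) = 1 := by
    rw [Real.rpow_neg_one]
    exact mul_inv_cancel₀ h2.ne'
  calc (2:ℝ) ^ (-1/l) * y₁ ^ l = 2 ^ (-1/l) * (y₁ * y₁ ^ (l-1)) * (y₂ * y₂ ^ (-1:ℝ)) := by
        rw [e1, e2]; ring
    _ = y₁ * y₂ * (y₁ ^ (l-1) * (2 ^ (-1/l) * y₂ ^ (-1:ℝ))) := by ring

theorem stmt_12 (l : ℝ) (hl : 0 < l) (hl1 : l < 1) :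
    ∃ ν : ℝ, 0 < ν ∧ ∀ y₁ y₂ : ℝ, y₁ ∈ Set.Ioc (0:ℝ) 1 → y₂ ∈ Set.Ioc (0:ℝ) 1 →
      deriv (fun xN => psi l y₁ y₂ xN) 0 ≤ -ν * min y₁ y₂ ^ l := by
  have h1l : (0:ℝ) < 1 - l := by linarith
  refine ⟨(1 - l) * 2 ^ (-1/l), by positivity, ?_⟩
  intro y₁ y₂ hy₁ hy₂
  obtain ⟨h1, _⟩ := hy₁
  obtain ⟨h2, _⟩ := hy₂
  -- compute the derivative
  have hd1 : HasDerivAt (fun x : ℝ => (y₁ + x) ^ l) (1 * l * (y₁ + 0) ^ (l - 1)) 0 :=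
    ((hasDerivAt_id 0).const_add y₁).rpow_const (Or.inl (by simpa using h1.ne'))
  have hd2 : HasDerivAt (fun x : ℝ => (y₂ + x) ^ l) (1 * l * (y₂ + 0) ^ (l - 1)) 0 :=
    ((hasDerivAt_id 0).const_add y₂).rpow_const (Or.inl (by simpa using h2.ne'))
  have hsum := hd1.add hd2
  have hSpos : (0:ℝ) < (y₁ + 0) ^ l + (y₂ + 0) ^ l := by positivity
  have hout := hsum.rpow_const (p := -1/l + 1) (Or.inl hSpos.ne')
  have hfull := hout.const_mul (y₁ * y₂)
  have hderiv : deriv (fun xN => psi l y₁ y₂ xN) 0 =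
      y₁ * y₂ * ((1 * l * (y₁ + 0) ^ (l - 1) + 1 * l * (y₂ + 0) ^ (l - 1)) * (-1/l + 1) *
        ((y₁ + 0) ^ l + (y₂ + 0) ^ l) ^ (-1/l + 1 - 1)) := by
    simp only [psi]
    exact hfull.deriv
  rw [hderiv]
  simp only [add_zero]
  have hexp : -1/l + 1 - 1 = -1/l := by ring
  rw [hexp]
  have hcoef : (1 * l * y₁ ^ (l - 1) + 1 * l * y₂ ^ (l - 1)) * (-1/l + 1) =
      -((1 - l) * (y₁ ^ (l - 1) + y₂ ^ (l - 1))) := by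
    field_simp
    ring
  rw [hcoef]
  rcases le_total y₁ y₂ with h12 | h12
  · have := key_ineq l y₁ y₂ hl hl1 h1 h2 h12
    rw [min_eq_left h12]
    nlinarith [this, h1l]
  · have := key_ineq l y₂ y₁ hl hl1 h2 h1 h12
    rw [add_comm (y₂ ^ (l-1)) (y₁ ^ (l-1)), add_comm (y₂ ^ l) (y₁ ^ l)] at this
    rw [min_eq_right h12]
    nlinarith [this, h1l]
end
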